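/- Let h ≥ 3 be an integer and let A be an (h+1)-term arithmetic progression of positive integers with common difference d. Then |h^∧_± A| ≥ (h+1)² if d = 2·min(A), and |h^∧_± A| ≥ (h+1)² + 1 otherwise. -/
import Mathlib


open Finset

/-- The restricted `h`-fold signed sumset of a finite set `A` of integers:
all sums `∑ λᵢ aᵢ` with `λᵢ ∈ {-1,0,1}` and `∑ |λᵢ| = h`. -/
def signedSumset (h : ℕ) (A : Finset ℤ) : Set ℤ :=
  {s | ∃ f : ℤ → ℤ, (∀ a, f a = -1 ∨ f a = 0 ∨ f a = 1) ∧ (∀ a ∉ A, f a = 0) ∧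
    (∑ a ∈ A, |f a|) = (h : ℤ) ∧ s = ∑ a ∈ A, f a * a}


lemma memA (h : ℕ) (a d : ℤ) (hd : 0 < d) (A : Finset ℤ)
    (hA : A = (Finset.range (h + 1)).image (fun i : ℕ => a + (i : ℤ) * d))
    (P : Finset ℕ) (j : ℕ) (hP : P ⊆ range (h+1)) (hj : j < h+1) (hjP : j ∉ P) :
    ((2*(P.card:ℤ) - h)*a + ((2*(∑ i ∈ P, (i:ℤ)) + j) - (∑ i ∈ range (h+1), (i:ℤ)))*d)
      ∈ signedSumset h A := by
  classical
  set g : ℕ → ℤ := fun i => a + (i:ℤ)*d with hg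
  have hginj : Function.Injective g := by
    intro x y hxy
    simp only [hg] at hxy
    have : (x:ℤ) * d = y * d := by linarith
    have := mul_right_cancel₀ (ne_of_gt hd) this
    exact_mod_cast this
  have hmem : ∀ (s : Finset ℕ) (i : ℕ), g i ∈ s.image g ↔ i ∈ s := by
    intro s i
    constructor
    · intro hm
      obtain ⟨x, hx, he⟩ := mem_image.1 hm
      rwa [hginj he] at hx
    · intro hi; exact mem_image_of_mem g hi
  set f : ℤ → ℤ := fun x => if x ∈ P.image g then 1 else if x ∈ ((range (h+1)).erase j).image g then -1 else 0 with hf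
  have hfval : ∀ i, i < h+1 → f (g i) = if i ∈ P then 1 else if i = j then 0 else -1 := by
    intro i hi
    by_cases h1 : i ∈ P
    · rw [if_pos h1]
      show (if g i ∈ P.image g then (1:ℤ) else _) = 1
      rw [if_pos ((hmem P i).mpr h1)]
    · rw [if_neg h1]
      have hnp : g i ∉ P.image g := fun hx => h1 ((hmem P i).1 hx)
      by_cases h2 : i = j
      · rw [if_pos h2]
        show (if g i ∈ P.image g then (1:ℤ) else if g i ∈ ((range (h+1)).erase j).image g then -1 else 0) = 0
        rw [if_neg hnp, if_neg (fun hx => (mem_erase.1 ((hmem _ i).1 hx)).1 h2)]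
      · rw [if_neg h2]
        show (if g i ∈ P.image g then (1:ℤ) else if g i ∈ ((range (h+1)).erase j).image g then -1 else 0) = -1
        rw [if_neg hnp, if_pos ((hmem _ i).mpr (mem_erase.2 ⟨h2, mem_range.2 hi⟩))]
  have hAsum : ∀ F : ℤ → ℤ, ∑ x ∈ A, F x = ∑ i ∈ range (h+1), F (g i) := by
    intro F
    rw [hA]
    exact sum_image (fun x _ y _ hxy => hginj hxy)
  refine ⟨f, ?_, ?_, ?_, ?_⟩
  · intro x
    by_cases h1 : x ∈ P.image g
    · have hv : f x = 1 := by
        show (if x ∈ P.image g then (1:ℤ) else _) = 1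
        rw [if_pos h1]
      rw [hv]; tauto
    · by_cases h2 : x ∈ ((range (h+1)).erase j).image g
      · have hv : f x = -1 := by
          show (if x ∈ P.image g then (1:ℤ) else if x ∈ ((range (h+1)).erase j).image g then -1 else 0) = -1
          rw [if_neg h1, if_pos h2]
        rw [hv]; tauto
      · have hv : f x = 0 := by
          show (if x ∈ P.image g then (1:ℤ) else if x ∈ ((range (h+1)).erase j).image g then -1 else 0) = 0
          rw [if_neg h1, if_neg h2]
        rw [hv]; tauto
  · intro x hx
    have h1 : x ∉ P.image g := fun hmem' => hx (by
      rw [hA]; exact image_subset_image hP hmem')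
    have h2 : x ∉ ((range (h+1)).erase j).image g := fun hmem' => hx (by
      rw [hA]; exact image_subset_image (erase_subset _ _) hmem')
    show (if x ∈ P.image g then (1:ℤ) else if x ∈ ((range (h+1)).erase j).image g then -1 else 0) = 0
    rw [if_neg h1, if_neg h2]
  · rw [hAsum]
    have habs : ∀ i ∈ range (h+1), |f (g i)| = 1 - (if i = j then 1 else 0) := by
      intro i hi
      rw [hfval i (mem_range.1 hi)]
      by_cases h1 : i ∈ P
      · have h2 : i ≠ j := fun he => hjP (he ▸ h1)
        rw [if_pos h1, if_neg h2]; norm_num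
      · by_cases h2 : i = j
        · rw [if_neg h1, if_pos h2, if_pos h2]; norm_num
        · rw [if_neg h1, if_neg h2, if_neg h2]; norm_num
    rw [sum_congr rfl habs, Finset.sum_sub_distrib]
    rw [Finset.sum_ite_eq' (range (h+1)) j (fun _ => (1:ℤ))]
    simp [mem_range.2 hj]
  · rw [hAsum]
    have key : ∀ i ∈ range (h+1), f (g i) * g i
        = 2*(if i ∈ P then g i else 0) + (if i = j then g i else 0) - g i := by
      intro i hi
      rw [hfval i (mem_range.1 hi)]
      by_cases h1 : i ∈ P
      · have h2 : i ≠ j := fun he => hjP (he ▸ h1)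
        rw [if_pos h1, if_pos h1, if_neg h2]; ring
      · by_cases h2 : i = j
        · rw [if_neg h1, if_pos h2, if_neg h1, if_pos h2]; ring
        · rw [if_neg h1, if_neg h2, if_neg h1, if_neg h2]; ring
    rw [sum_congr rfl key]
    rw [Finset.sum_sub_distrib, Finset.sum_add_distrib, ← Finset.mul_sum]
    rw [Finset.sum_ite_mem, Finset.sum_ite_eq' (range (h+1)) j g]
    rw [inter_eq_right.mpr hP]
    have e1 : ∑ i ∈ P, g i = (P.card : ℤ) * a + (∑ i ∈ P, (i:ℤ)) * d := by
      simp only [hg, Finset.sum_add_distrib, Finset.sum_mul]; simp [mul_comm]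
    have e2 : ∑ i ∈ range (h+1), g i = ((h:ℤ)+1) * a + (∑ i ∈ range (h+1), (i:ℤ)) * d := by
      simp only [hg, Finset.sum_add_distrib, Finset.sum_mul]
      simp [mul_comm]
    rw [e1, e2, if_pos (mem_range.2 hj)]
    show _ = 2 * ((P.card:ℤ) * a + (∑ i ∈ P, (i:ℤ)) * d) + (a + (j:ℤ)*d) - (((h:ℤ)+1)*a + (∑ i ∈ range (h+1), (i:ℤ)) * d)
    ring

lemma lemB (h : ℕ) (hh : 3 ≤ h) (k v : ℕ) (hk : k ≤ h) (h1 : k^2 ≤ v)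
    (h2 : v ≤ (k+1)^2) (h3 : v ≤ h*(h+1)) :
    ∃ (P : Finset ℕ) (j : ℕ), P ⊆ range (h+1) ∧ j < h+1 ∧ j ∉ P ∧ P.card = k ∧
      2 * (∑ i ∈ P, i) + j = v := by
  classical
  have gauss : ∀ n : ℕ, (∑ i ∈ range n, i) * 2 = n * (n-1) := fun n => Finset.sum_range_id_mul_two n
  have hA : (k+1)^2 = k^2+2*k+1 := by ring
  have hB : k*(k+1) = k^2+k := by ring
  have hg1 : (∑ i ∈ range (k+1), i) * 2 = k^2 + k := by
    rw [gauss]; simp; ring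
  have hg2 : (∑ i ∈ range (k+2), i) * 2 = k^2 + 3*k + 2 := by
    rw [gauss]; simp; ring
  rcases eq_or_lt_of_le hk with hkh | hkh
  · -- k = h
    subst hkh
    set j := k*(k+1) - v with hjdef
    have hjk : j ≤ k := by omega
    have hjmem : j ∈ range (k+1) := mem_range.2 (by omega)
    refine ⟨(range (k+1)).erase j, j, (erase_subset _ _).trans (by simp), by omega, notMem_erase _ _, ?_, ?_⟩
    · rw [card_erase_of_mem hjmem]; simp
    · have hsum := Finset.add_sum_erase _ id hjmem
      simp only [id] at hsum
      omega
  · -- k < h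
    set r := v - k^2 with hrdef
    have hr : r ≤ 2*k+1 := by omega
    have hrv : v = k^2 + r := by omega
    by_cases hc1 : r ≤ k
    · set m := k - r with hm
      have hmmem : m ∈ range (k+1) := mem_range.2 (by omega)
      refine ⟨(range (k+1)).erase m, m, (erase_subset _ _).trans (by intro x hx; simp at hx ⊢; omega),
        by omega, notMem_erase _ _, ?_, ?_⟩
      · rw [card_erase_of_mem hmmem]; simp
      · have hsum := Finset.add_sum_erase _ id hmmem
        simp only [id] at hsum
        omega
    · by_cases hc2 : r % 2 = 1
      · -- r odd
        set m := k - (r-1)/2 with hm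
        have h2m : 2*m = 2*k+1 - r := by omega
        have hmmem : m ∈ range (k+1) := mem_range.2 (by omega)
        refine ⟨(range (k+1)).erase m, k+1, (erase_subset _ _).trans (by intro x hx; simp at hx ⊢; omega),
          by omega, fun hx => absurd (mem_range.1 (mem_of_mem_erase hx)) (by omega), ?_, ?_⟩
        · rw [card_erase_of_mem hmmem]; simp
        · have hsum := Finset.add_sum_erase _ id hmmem
          simp only [id] at hsum
          omega
      · -- r even, r > k
        rcases eq_or_lt_of_le (show 1 ≤ k by omega) with hk1 | hk2
        · -- k = 1, r = 2
          have hk1' : k = 1 := hk1.symm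
          subst hk1'
          norm_num at hrv
          refine ⟨{0}, 3, by intro x hx; simp at hx ⊢; omega, by omega, by simp, by simp, ?_⟩
          have hs0 : (∑ i ∈ ({0}:Finset ℕ), i) = 0 := by simp
          rw [hs0]
          omega
        · -- k ≥ 2, r even, k < r ≤ 2k, so 4 ≤ r
          have hr4 : 4 ≤ r := by omega
          have hr2k : r ≤ 2*k := by omega
          set m := k + 1 - r/2 with hm
          have h2m : 2*m = 2*k+2 - r := by omega
          have hmk : m ≤ k - 1 := by omega
          have hkmem : k ∈ range (k+2) := mem_range.2 (by omega)
          have hmmem : m ∈ (range (k+2)).erase k := mem_erase.2 ⟨by omega, mem_range.2 (by omega)⟩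
          refine ⟨((range (k+2)).erase k).erase m, k, ?_, by omega, ?_, ?_, ?_⟩
          · intro x hx; simp at hx ⊢; omega
          · intro hx; exact (mem_erase.1 (mem_of_mem_erase hx)).1 rfl
          · rw [card_erase_of_mem hmmem, card_erase_of_mem hkmem]; simp
          · have hsum1 := Finset.add_sum_erase _ id hkmem
            have hsum2 := Finset.add_sum_erase _ id hmmem
            simp only [id] at hsum1 hsum2
            omega

section chain
variable (h : ℕ)

def chainD (h : ℕ) : Finset (ℕ × ℕ) :=
  (range (h+1)).biUnion (fun k => (Icc (k^2) (min ((k+1)^2) (h*(h+1)))).image (fun v => (k, v)))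

lemma mem_chainD (p : ℕ × ℕ) :
    p ∈ chainD h ↔ p.1 ≤ h ∧ p.1^2 ≤ p.2 ∧ p.2 ≤ (p.1+1)^2 ∧ p.2 ≤ h*(h+1) := by
  obtain ⟨k, v⟩ := p
  simp only [chainD, mem_biUnion, mem_image, mem_Icc, mem_range, Prod.mk.injEq]
  constructor
  · rintro ⟨k', hk', v', ⟨hv1, hv2⟩, rfl, rfl⟩
    exact ⟨by omega, hv1, le_trans hv2 (min_le_left _ _), le_trans hv2 (min_le_right _ _)⟩
  · rintro ⟨hk, hv1, hv2, hv3⟩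
    exact ⟨k, by omega, v, ⟨hv1, le_min hv2 hv3⟩, rfl, rfl⟩

lemma chainD_card (hh : 3 ≤ h) : (chainD h).card = (h+1)^2 := by
  rw [chainD, card_biUnion]
  · have hterm : ∀ k ∈ range (h+1),
        ((Icc (k^2) (min ((k+1)^2) (h*(h+1)))).image (fun v => (k, v))).card
          = min ((k+1)^2) (h*(h+1)) + 1 - k^2 := by
      intro k hk
      rw [card_image_of_injective _ (fun x y hxy => by simpa using hxy), Nat.card_Icc]
    rw [sum_congr rfl hterm, sum_range_succ]
    have hlast : min ((h+1)^2) (h*(h+1)) + 1 - h^2 = h + 1 := by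
      rw [min_eq_right (by nlinarith)]
      have : h*(h+1) = h^2 + h := by ring
      omega
    have hmid : ∀ k ∈ range h, min ((k+1)^2) (h*(h+1)) + 1 - k^2 = 2*k+2 := by
      intro k hk
      have hk' : k < h := mem_range.1 hk
      rw [min_eq_left (by nlinarith)]
      have : (k+1)^2 = k^2 + 2*k+1 := by ring
      omega
    rw [sum_congr rfl hmid, hlast]
    have : ∑ k ∈ range h, (2*k+2) = 2 * ∑ k ∈ range h, k + 2*h := by
      rw [Finset.sum_add_distrib, Finset.mul_sum]
      simp [mul_comm]
    rw [this]
    have hg := Finset.sum_range_id_mul_two h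
    have h1 : h*(h-1) + h = h*h := by
      have : h - 1 + 1 = h := by omega
      calc h*(h-1) + h = h*((h-1)+1) := by rw [Nat.mul_succ]
        _ = h*h := by rw [this]
    have h2 : (h+1)^2 = h*h + 2*h + 1 := by ring
    omega
  · intro x hx y hy hxy
    simp only [disjoint_left, mem_image, mem_Icc]
    rintro p ⟨v, hv, rfl⟩ ⟨v', hv', he⟩
    have h2 := (Prod.ext_iff.1 he).1
    exact hxy h2.symm

end chain
lemma chain_inj (h : ℕ) (a d T : ℤ) (ha : 0 < a) (hd : 0 < d) :
    Set.InjOn (fun p : ℕ × ℕ => (2*(p.1:ℤ) - h)*a + ((p.2:ℤ) - T)*d) (chainD h) := by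
  have key : ∀ (k v k' v' : ℕ), (k, v) ∈ chainD h → (k', v') ∈ chainD h → v < v' →
      (2*(k:ℤ) - h)*a + ((v:ℤ) - T)*d < (2*(k':ℤ) - h)*a + ((v':ℤ) - T)*d := by
    intro k v k' v' hp hq hvv
    rw [mem_chainD] at hp hq
    simp only at hp hq
    obtain ⟨hk, hp1, hp2, hp3⟩ := hp
    obtain ⟨hk', hq1, hq2, hq3⟩ := hq
    have hkk : k ≤ k' := by
      by_contra hcon
      push_neg at hcon
      have : (k'+1)^2 ≤ k^2 := Nat.pow_le_pow_left (by omega) 2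
      omega
    have c1 : (k:ℤ) ≤ (k':ℤ) := by exact_mod_cast hkk
    have c2 : (v:ℤ) + 1 ≤ (v':ℤ) := by exact_mod_cast hvv
    have t1 : (0:ℤ) ≤ 2*((k':ℤ) - k)*a := mul_nonneg (by linarith) ha.le
    have t2 : d*1 ≤ d*((v':ℤ) - v) := mul_le_mul_of_nonneg_left (by linarith) hd.le
    nlinarith
  rintro ⟨k, v⟩ hp ⟨k', v'⟩ hq he
  simp only [mem_coe] at hp hq
  simp only at he
  rcases lt_trichotomy v v' with hvv | hvv | hvv
  · exact absurd he (ne_of_lt (key k v k' v' hp hq hvv))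
  · subst hvv
    have : (2*(k:ℤ))*a = (2*(k':ℤ))*a := by linarith [he]
    have := mul_right_cancel₀ (ne_of_gt ha) this
    have : (k:ℤ) = (k':ℤ) := by linarith
    have : k = k' := by exact_mod_cast this
    rw [this]
  · exact absurd he.symm (ne_of_lt (key k' v' k v hq hp hvv))

lemma sumset_finite (h : ℕ) (A : Finset ℤ) : (signedSumset h A).Finite := by
  apply Set.Finite.subset (Finset.finite_toSet (Finset.Icc (-(∑ x ∈ A, |x|)) (∑ x ∈ A, |x|)))
  rintro s ⟨f, hf1, hf2, hf3, rfl⟩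
  simp only [Finset.coe_Icc, Set.mem_Icc]
  rw [← abs_le]
  calc |∑ x ∈ A, f x * x| ≤ ∑ x ∈ A, |f x * x| := Finset.abs_sum_le_sum_abs _ _
    _ ≤ ∑ x ∈ A, |x| := Finset.sum_le_sum (fun x hx => by
        rw [abs_mul]
        rcases hf1 x with h|h|h <;> rw [h] <;> simp)

theorem stmt4 (h : ℕ) (hh : 3 ≤ h) (a d : ℤ) (ha : 0 < a) (hd : 0 < d)
    (A : Finset ℤ) (hA : A = (Finset.range (h + 1)).image (fun i : ℕ => a + (i : ℤ) * d)) :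
    (d = 2 * a → (h + 1) ^ 2 ≤ (signedSumset h A).ncard) ∧
    (d ≠ 2 * a → (h + 1) ^ 2 + 1 ≤ (signedSumset h A).ncard) := by
  classical
  set T : ℤ := ∑ i ∈ range (h+1), (i:ℤ) with hT
  set φ : ℕ × ℕ → ℤ := fun p => (2*(p.1:ℤ) - h)*a + ((p.2:ℤ) - T)*d with hφ
  have hmemD : ∀ p ∈ chainD h, φ p ∈ signedSumset h A := by
    rintro ⟨k, v⟩ hp
    rw [mem_chainD] at hp
    simp only at hp
    obtain ⟨hk, h1, h2, h3⟩ := hp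
    obtain ⟨P, j, hP, hj, hjP, hcard, hsum⟩ := lemB h hh k v hk h1 h2 h3
    have hmm := memA h a d hd A hA P j hP hj hjP
    have hcast : 2*(∑ i ∈ P, (i:ℤ)) + (j:ℤ) = (v:ℤ) := by
      have h0 : ((2 * (∑ i ∈ P, i) + j : ℕ) : ℤ) = ((v:ℕ) : ℤ) := by exact_mod_cast congrArg (Nat.cast : ℕ → ℤ) hsum
      push_cast at h0
      linarith
    have heq : ((2*(P.card:ℤ) - h)*a + ((2*(∑ i ∈ P, (i:ℤ)) + j) - T)*d) = φ (k, v) := by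
      rw [hcard, hcast]
    rwa [heq] at hmm
  have hinj := chain_inj h a d T ha hd
  have himg : ((chainD h).image φ).card = (h+1)^2 := by
    rw [Finset.card_image_of_injOn hinj, chainD_card h hh]
  have hsubset : ↑((chainD h).image φ) ⊆ signedSumset h A := by
    intro x hx
    simp only [coe_image, Set.mem_image, mem_coe] at hx
    obtain ⟨p, hp, rfl⟩ := hx
    exact hmemD p hp
  have hfin := sumset_finite h A
  have hbase : (h+1)^2 ≤ (signedSumset h A).ncard := by
    have := Set.ncard_le_ncard hsubset hfin
    rwa [Set.ncard_coe_finset, himg] at this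
  constructor
  · intro _; exact hbase
  · intro hne
    rcases lt_or_gt_of_ne hne with hlt | hgt
    · -- d < 2a: extra point s₀ = (0-h)a + (2-T)d
      set s₀ : ℤ := (0 - (h:ℤ))*a + (2 - T)*d with hs₀
      have hmem0 : s₀ ∈ signedSumset h A := by
        have hmm := memA h a d hd A hA ∅ 2 (empty_subset _) (by omega) (notMem_empty _)
        have : (2*(((∅:Finset ℕ).card):ℤ) - h)*a + ((2*(∑ i ∈ (∅:Finset ℕ), (i:ℤ)) + ((2:ℕ):ℤ)) - T)*d = s₀ := by
          simp [hs₀]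
        rwa [this] at hmm
      have hnot0 : s₀ ∉ (chainD h).image φ := by
        intro hmem
        simp only [mem_image] at hmem
        obtain ⟨⟨k, v⟩, hp, he⟩ := hmem
        rw [mem_chainD] at hp
        simp only at hp
        obtain ⟨hk, h1, h2, h3⟩ := hp
        have key : 2*(k:ℤ)*a + (v:ℤ)*d - 2*d = 0 := by
          rw [hφ, hs₀] at he
          simp only at he
          linear_combination he
        rcases Nat.lt_or_ge k 1 with hk0 | hk1
        · -- k = 0, v ≤ 1
          have hkz : k = 0 := by omega
          have e1 : (k+1)^2 = 1 := by rw [hkz]; norm_num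
          have hv1 : v ≤ 1 := by omega
          have c1 : ((k:ℤ)) = 0 := by exact_mod_cast congrArg (Nat.cast : ℕ → ℤ) hkz
          have c2 : (v:ℤ) ≤ 1 := by exact_mod_cast hv1
          have t1 : (v:ℤ)*d ≤ 1*d := mul_le_mul_of_nonneg_right c2 hd.le
          have t2 : 2*(k:ℤ)*a = 0 := by rw [c1]; ring
          linarith
        rcases Nat.lt_or_ge k 2 with hk1' | hk2
        · -- k = 1, 1 ≤ v
          have hkz : k = 1 := by omega
          have e1 : k^2 = 1 := by rw [hkz]; norm_num
          have hv1 : 1 ≤ v := by omega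
          have c1 : ((k:ℤ)) = 1 := by exact_mod_cast congrArg (Nat.cast : ℕ → ℤ) hkz
          have c2 : (1:ℤ) ≤ (v:ℤ) := by exact_mod_cast hv1
          have t1 : 1*d ≤ (v:ℤ)*d := mul_le_mul_of_nonneg_right c2 hd.le
          have t2 : 2*(k:ℤ)*a = 2*a := by rw [c1]; ring
          linarith
        · -- k ≥ 2, v ≥ 4
          have e1 : 4 ≤ k^2 := by
            calc (4:ℕ) = 2^2 := by norm_num
              _ ≤ k^2 := Nat.pow_le_pow_left hk2 2
          have hv4 : 4 ≤ v := by omega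
          have c1 : (2:ℤ) ≤ (k:ℤ) := by exact_mod_cast hk2
          have c2 : (4:ℤ) ≤ (v:ℤ) := by exact_mod_cast hv4
          have t1 : 4*d ≤ (v:ℤ)*d := mul_le_mul_of_nonneg_right c2 hd.le
          have t2 : (0:ℤ) ≤ (k:ℤ)*a := mul_nonneg (by linarith) ha.le
          linarith
      have hcard1 : (insert s₀ ((chainD h).image φ)).card = (h+1)^2 + 1 := by
        rw [card_insert_of_notMem hnot0, himg]
      have hsub1 : ↑(insert s₀ ((chainD h).image φ)) ⊆ signedSumset h A := by
        intro x hx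
        simp only [coe_insert, Set.mem_insert_iff] at hx
        rcases hx with rfl | hx
        · exact hmem0
        · exact hsubset hx
      have := Set.ncard_le_ncard hsub1 hfin
      rwa [Set.ncard_coe_finset, hcard1] at this
    · -- d > 2a: extra point s₁ = (2-h)a + (6-T)d
      set s₁ : ℤ := (2 - (h:ℤ))*a + (6 - T)*d with hs₁
      have hmem1 : s₁ ∈ signedSumset h A := by
        have hmm := memA h a d hd A hA {3} 0 (by intro x hx; simp at hx; simp [hx]; omega) (by omega) (by simp)
        have : (2*((({3}:Finset ℕ).card):ℤ) - h)*a + ((2*(∑ i ∈ ({3}:Finset ℕ), (i:ℤ)) + ((0:ℕ):ℤ)) - T)*d = s₁ := by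
          simp [hs₁]
        rwa [this] at hmm
      have hnot1 : s₁ ∉ (chainD h).image φ := by
        intro hmem
        simp only [mem_image] at hmem
        obtain ⟨⟨k, v⟩, hp, he⟩ := hmem
        rw [mem_chainD] at hp
        simp only at hp
        obtain ⟨hk, h1, h2, h3⟩ := hp
        have key : 2*(k:ℤ)*a + (v:ℤ)*d - 2*a - 6*d = 0 := by
          rw [hφ, hs₁] at he
          simp only at he
          linear_combination he
        rcases Nat.lt_or_ge k 1 with hk0 | hk1
        · -- k = 0, v ≤ 1
          have hkz : k = 0 := by omega
          have e1 : (k+1)^2 = 1 := by rw [hkz]; norm_num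
          have hv1 : v ≤ 1 := by omega
          have c1 : ((k:ℤ)) = 0 := by exact_mod_cast congrArg (Nat.cast : ℕ → ℤ) hkz
          have c2 : (v:ℤ) ≤ 1 := by exact_mod_cast hv1
          have t1 : (v:ℤ)*d ≤ 1*d := mul_le_mul_of_nonneg_right c2 hd.le
          have t2 : 2*(k:ℤ)*a = 0 := by rw [c1]; ring
          linarith
        rcases Nat.lt_or_ge k 2 with hk1' | hk2
        · -- k = 1, v ≤ 4
          have hkz : k = 1 := by omega
          have e1 : (k+1)^2 = 4 := by rw [hkz]; norm_num
          have hv4 : v ≤ 4 := by omega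
          have c1 : ((k:ℤ)) = 1 := by exact_mod_cast congrArg (Nat.cast : ℕ → ℤ) hkz
          have c2 : (v:ℤ) ≤ 4 := by exact_mod_cast hv4
          have t1 : (v:ℤ)*d ≤ 4*d := mul_le_mul_of_nonneg_right c2 hd.le
          have t2 : 2*(k:ℤ)*a = 2*a := by rw [c1]; ring
          linarith
        rcases Nat.lt_or_ge k 3 with hk2' | hk3
        · -- k = 2, 4 ≤ v ≤ 9
          have hkz : k = 2 := by omega
          have c1 : ((k:ℤ)) = 2 := by exact_mod_cast congrArg (Nat.cast : ℕ → ℤ) hkz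
          have t2 : 2*(k:ℤ)*a = 4*a := by rw [c1]; ring
          rcases Nat.lt_or_ge v 6 with hv5 | hv6
          · have c2 : (v:ℤ) ≤ 5 := by exact_mod_cast Nat.lt_succ_iff.mp (by omega)
            have t1 : (v:ℤ)*d ≤ 5*d := mul_le_mul_of_nonneg_right c2 hd.le
            linarith
          · have c2 : (6:ℤ) ≤ (v:ℤ) := by exact_mod_cast hv6
            have t1 : 6*d ≤ (v:ℤ)*d := mul_le_mul_of_nonneg_right c2 hd.le
            linarith
        · -- k ≥ 3, v ≥ 9
          have e1 : 9 ≤ k^2 := by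
            calc (9:ℕ) = 3^2 := by norm_num
              _ ≤ k^2 := Nat.pow_le_pow_left hk3 2
          have hv9 : 9 ≤ v := by omega
          have c1 : (3:ℤ) ≤ (k:ℤ) := by exact_mod_cast hk3
          have c2 : (9:ℤ) ≤ (v:ℤ) := by exact_mod_cast hv9
          have t1 : 9*d ≤ (v:ℤ)*d := mul_le_mul_of_nonneg_right c2 hd.le
          have t2 : 3*a ≤ (k:ℤ)*a := mul_le_mul_of_nonneg_right c1 ha.le
          linarith
      have hcard1 : (insert s₁ ((chainD h).image φ)).card = (h+1)^2 + 1 := by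
        rw [card_insert_of_notMem hnot1, himg]
      have hsub1 : ↑(insert s₁ ((chainD h).image φ)) ⊆ signedSumset h A := by
        intro x hx
        simp only [coe_insert, Set.mem_insert_iff] at hx
        rcases hx with rfl | hx
        · exact hmem1
        · exact hsubset hx
      have := Set.ncard_le_ncard hsub1 hfin
      rwa [Set.ncard_coe_finset, hcard1] at this
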